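/- Let ρ^(B):[0,∞)×ℝ→ℝ be defined by: for 0 < t ≤ 1, ρ^(B)(t,x) = (x+1)/(2t) if x ∈ [−1, 2t−1], ρ^(B)(t,x) = 1 if x ∈ (2t−1, t], and 0 otherwise; for t > 1, ρ^(B)(t,x) = (x+1)/(2t) if x ∈ [−1, 2√t − 1] and 0 otherwise; and ρ^(B)(0,·) = 1_{[−1,0]}. Fix T > 0. Then for every measurable function f:[0,T]×ℝ→ℝ with f(t,x) = 0 for almost every (t,x) with x > 0, one has ‖f − ρ^(B)‖_{L¹([0,T]×ℝ)} ≥ ∫_0^T ∫_0^∞ ρ^(B)(t,x) dx dt > 0. In particular, no sequence of functions vanishing almost everywhere on [0,T]×(0,∞) converges to ρ^(B) in L¹([0,T]×ℝ). -/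

import Mathlib

open MeasureTheory Set Filter

/-!
Where `f` vanishes, `|f - ρ^(B)| = ρ^(B)`, so the `L¹([0,T]×ℝ)` distance from `f` to `ρ^(B)` is at
least the mass of `ρ^(B)` on `[0,T]×(0,∞)`. Since `0 ≤ ρ^(B) ≤ 1` and `ρ^(B)(t,·)` is supported in
`[-1,t]`, this mass is finite; it is positive because `ρ^(B) = 1` on `{0 < x ≤ t ≤ 1/2}`, which
lies between the head `x = 2t - 1` of the rarefaction fan and the shock `x = t`.
-/

/-- The explicit entropy admissible solution of Example B. -/
noncomputable def rhoB (t x : ℝ) : ℝ :=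
  if t = 0 then indicator (Icc (-1 : ℝ) 0) (fun _ => (1 : ℝ)) x
  else if t ≤ 1 then
    if x ∈ Icc (-1 : ℝ) (2*t - 1) then (x + 1) / (2*t)
    else if x ∈ Ioc (2*t - 1) t then 1
    else 0
  else
    if x ∈ Icc (-1 : ℝ) (2 * Real.sqrt t - 1) then (x + 1) / (2*t)
    else 0

lemma setLIntegral_ofReal_le_setLIntegral_abs_sub {α : Type*} [MeasurableSpace α] {μ : Measure α}
    {s t : Set α} {f g : α → ℝ} (hst : s ⊆ t) (hg : 0 ≤ᵐ[μ.restrict s] g)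
    (hf : f =ᵐ[μ.restrict s] 0) :
    ∫⁻ x in s, ENNReal.ofReal (g x) ∂μ ≤ ∫⁻ x in t, ENNReal.ofReal |f x - g x| ∂μ :=
  calc ∫⁻ x in s, ENNReal.ofReal (g x) ∂μ = ∫⁻ x in s, ENNReal.ofReal |f x - g x| ∂μ := by
        refine lintegral_congr_ae ?_
        filter_upwards [hf, hg] with x hfx hgx
        rw [hfx, Pi.zero_apply, zero_sub, abs_neg, abs_of_nonneg hgx]
    _ ≤ _ := lintegral_mono_set hst

lemma two_mul_sqrt_le_add_one {t : ℝ} (ht : 0 ≤ t) : 2 * √t ≤ t + 1 := by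
  nlinarith [Real.sq_sqrt ht, sq_nonneg (√t - 1)]

lemma measurable_rhoB : Measurable (Function.uncurry rhoB) := by
  unfold rhoB Function.uncurry
  simp only [mem_Icc, mem_Ioc, indicator_apply]
  repeat' apply Measurable.ite
  all_goals first | fun_prop | exact measurableSet_setOfPred.2 (by fun_prop)

lemma rhoB_mem_Icc (t x : ℝ) : rhoB t x ∈ Icc (0 : ℝ) 1 := by
  unfold rhoB
  split_ifs with h0 h1 hx hx hx
  · by_cases hx : x ∈ Icc (-1 : ℝ) 0 <;> simp [hx]
  · have ht : 0 < t := lt_of_le_of_ne (by linarith [hx.1, hx.2]) (Ne.symm h0)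
    exact ⟨div_nonneg (by linarith [hx.1]) (by positivity),
      (div_le_one (by positivity)).2 (by linarith [hx.2])⟩
  · simp
  · simp
  · have ht : 1 < t := not_le.1 h1
    have := two_mul_sqrt_le_add_one (by positivity : 0 ≤ t)
    exact ⟨div_nonneg (by linarith [hx.1]) (by positivity),
      (div_le_one (by positivity)).2 (by linarith [hx.2])⟩
  · simp

lemma mem_Icc_of_rhoB_ne_zero {t x : ℝ} (ht : 0 ≤ t) (h : rhoB t x ≠ 0) : x ∈ Icc (-1) t := by
  unfold rhoB at h
  split_ifs at h with h0 h1 hx hx hx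
  · subst h0
    by_contra hx
    exact h (indicator_of_notMem hx _)
  · exact ⟨hx.1, by linarith [hx.2]⟩
  · exact ⟨by linarith [hx.1], hx.2⟩
  · exact absurd rfl h
  · have := two_mul_sqrt_le_add_one ht
    exact ⟨hx.1, by linarith [hx.2]⟩
  · exact absurd rfl h

lemma rhoB_eq_one {t x : ℝ} (ht : t ≤ 1 / 2) (hx : 0 < x) (hxt : x ≤ t) : rhoB t x = 1 := by
  rw [rhoB, if_neg (by linarith), if_pos (by linarith), if_neg (fun h => by linarith [h.2]),
    if_pos ⟨by linarith, hxt⟩]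

lemma integrableOn_rhoB (T : ℝ) :
    IntegrableOn (Function.uncurry rhoB) (Icc (0:ℝ) T ×ˢ (univ : Set ℝ)) := by
  have hbox : IntegrableOn (Function.uncurry rhoB) (Icc 0 T ×ˢ Icc (-1) T) := by
    refine Measure.integrableOn_of_bounded (M := 1)
      (isCompact_Icc.prod isCompact_Icc).measure_ne_top measurable_rhoB.aestronglyMeasurable
      (ae_of_all _ fun p => ?_)
    obtain ⟨h0, h1⟩ : Function.uncurry rhoB p ∈ Icc 0 1 := rhoB_mem_Icc p.1 p.2
    exact abs_le.2 ⟨by linarith, h1⟩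
  refine hbox.of_forall_sdiff_eq_zero (measurableSet_Icc.prod .univ) fun p hp => ?_
  by_contra h
  obtain ⟨hx1, hx2⟩ := mem_Icc_of_rhoB_ne_zero hp.1.1.1 h
  exact hp.2 ⟨hp.1.1, hx1, hx2.trans hp.1.1.2⟩

lemma ofReal_integral_integral_rhoB (T : ℝ) :
    ENNReal.ofReal (∫ t in Icc (0:ℝ) T, ∫ x in Ioi (0:ℝ), rhoB t x) =
      ∫⁻ p in Icc (0:ℝ) T ×ˢ Ioi (0:ℝ), ENNReal.ofReal (Function.uncurry rhoB p) := by
  have h : IntegrableOn (Function.uncurry rhoB) (Icc 0 T ×ˢ Ioi 0) :=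
    (integrableOn_rhoB T).mono_set (prod_mono_right (subset_univ _))
  rw [Measure.volume_eq_prod] at h ⊢
  have hFubini := setIntegral_prod _ h
  simp only [Function.uncurry_apply_pair] at hFubini
  rw [← hFubini]
  exact ofReal_integral_eq_lintegral_ofReal h (ae_of_all _ fun p => (rhoB_mem_Icc p.1 p.2).1)

lemma lintegral_rhoB_pos {T : ℝ} (hT : 0 < T) :
    0 < ∫⁻ p in Icc (0:ℝ) T ×ˢ Ioi (0:ℝ), ENNReal.ofReal (Function.uncurry rhoB p) := by
  obtain ⟨s, hs0, hsT, hs1⟩ : ∃ s : ℝ, 0 < s ∧ s ≤ T ∧ s ≤ 1 / 2 :=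
    ⟨min T (1 / 2), by positivity, min_le_left _ _, min_le_right _ _⟩
  have hsub : Icc (s / 2) s ×ˢ Ioc 0 (s / 2) ⊆ Icc (0:ℝ) T ×ˢ Ioi (0:ℝ) :=
    prod_mono (Icc_subset_Icc (by positivity) hsT) Ioc_subset_Ioi_self
  calc 0 < volume (Icc (s / 2) s ×ˢ Ioc 0 (s / 2)) := by
        rw [Measure.volume_eq_prod, Measure.prod_prod, Real.volume_Icc, Real.volume_Ioc]
        exact ENNReal.mul_pos (ENNReal.ofReal_pos.2 (by linarith)).ne'
          (ENNReal.ofReal_pos.2 (by linarith)).ne'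
    _ = ∫⁻ p in Icc (s / 2) s ×ˢ Ioc 0 (s / 2), ENNReal.ofReal (Function.uncurry rhoB p) := by
        rw [← setLIntegral_one]
        refine setLIntegral_congr_fun (measurableSet_Icc.prod measurableSet_Ioc) fun p hp => ?_
        rw [Function.uncurry, rhoB_eq_one (hp.1.2.trans hs1) hp.2.1 (hp.2.2.trans hp.1.1),
          ENNReal.ofReal_one]
    _ ≤ _ := lintegral_mono_set hsub

lemma ofReal_integral_integral_rhoB_le_lintegral_abs_sub {T : ℝ} {f : ℝ → ℝ → ℝ}
    (hf : ∀ᵐ p ∂(volume.restrict (Icc (0:ℝ) T ×ˢ Ioi (0:ℝ))), Function.uncurry f p = 0) :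
    ENNReal.ofReal (∫ t in Icc (0:ℝ) T, ∫ x in Ioi (0:ℝ), rhoB t x) ≤
      ∫⁻ p in Icc (0:ℝ) T ×ˢ (univ : Set ℝ),
        ENNReal.ofReal |Function.uncurry f p - Function.uncurry rhoB p| := by
  rw [ofReal_integral_integral_rhoB]
  exact setLIntegral_ofReal_le_setLIntegral_abs_sub (prod_mono_right (subset_univ _))
    (ae_of_all _ fun p => (rhoB_mem_Icc p.1 p.2).1) hf

lemma integral_integral_rhoB_le_integral_abs_sub {T : ℝ} {f : ℝ → ℝ → ℝ}
    (hf : IntegrableOn (Function.uncurry f) (Icc (0:ℝ) T ×ˢ (univ : Set ℝ)))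
    (hf0 : ∀ᵐ p ∂(volume.restrict (Icc (0:ℝ) T ×ˢ Ioi (0:ℝ))), Function.uncurry f p = 0) :
    ∫ t in Icc (0:ℝ) T, ∫ x in Ioi (0:ℝ), rhoB t x ≤
      ∫ p in Icc (0:ℝ) T ×ˢ (univ : Set ℝ), |Function.uncurry f p - Function.uncurry rhoB p| := by
  have hint : IntegrableOn (fun p => |Function.uncurry f p - Function.uncurry rhoB p|)
      (Icc (0:ℝ) T ×ˢ (univ : Set ℝ)) := (hf.sub (integrableOn_rhoB T)).abs
  rw [← ENNReal.ofReal_le_ofReal_iff (integral_nonneg fun _ => abs_nonneg _),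
    ofReal_integral_eq_lintegral_ofReal hint (ae_of_all _ fun _ => abs_nonneg _)]
  exact ofReal_integral_integral_rhoB_le_lintegral_abs_sub hf0

/-- Any measurable function vanishing a.e. on `[0,T]×(0,∞)` is at `L¹([0,T]×ℝ)` distance
at least `∫_0^T ∫_0^∞ ρ^(B) > 0` from `ρ^(B)`; in particular, no sequence of functions
vanishing a.e. on `[0,T]×(0,∞)` converges to `ρ^(B)` in `L¹([0,T]×ℝ)`. -/
theorem rhoB_not_L1_limit_of_negatively_supported (T : ℝ) (hT : 0 < T) :
    (∀ f : ℝ → ℝ → ℝ, Measurable (Function.uncurry f) →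
      (∀ᵐ p ∂(volume.restrict (Icc (0:ℝ) T ×ˢ Ioi (0:ℝ))), Function.uncurry f p = 0) →
      ENNReal.ofReal (∫ t in Icc (0:ℝ) T, ∫ x in Ioi (0:ℝ), rhoB t x) ≤
        ∫⁻ p in Icc (0:ℝ) T ×ˢ (univ : Set ℝ),
          ENNReal.ofReal |Function.uncurry f p - Function.uncurry rhoB p|) ∧
    (0 < ∫ t in Icc (0:ℝ) T, ∫ x in Ioi (0:ℝ), rhoB t x) ∧
    (∀ f : ℕ → ℝ → ℝ → ℝ,
      (∀ n, IntegrableOn (Function.uncurry (f n)) (Icc (0:ℝ) T ×ˢ (univ : Set ℝ))) →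
      (∀ n, ∀ᵐ p ∂(volume.restrict (Icc (0:ℝ) T ×ˢ Ioi (0:ℝ))),
        Function.uncurry (f n) p = 0) →
      ¬ Tendsto
          (fun n => ∫ p in Icc (0:ℝ) T ×ˢ (univ : Set ℝ),
            |Function.uncurry (f n) p - Function.uncurry rhoB p|)
          atTop (nhds 0)) := by
  have hpos : 0 < ∫ t in Icc (0:ℝ) T, ∫ x in Ioi (0:ℝ), rhoB t x :=
    ENNReal.ofReal_pos.1 (ofReal_integral_integral_rhoB T ▸ lintegral_rhoB_pos hT)
  refine ⟨fun f _ hf0 => ofReal_integral_integral_rhoB_le_lintegral_abs_sub hf0, hpos,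
    fun f hf hf0 hlim => ?_⟩
  exact (ge_of_tendsto' hlim fun n =>
    integral_integral_rhoB_le_integral_abs_sub (hf n) (hf0 n)).not_gt hpos
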